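/- arXiv:1112.4128 — 5 statements merged into one kernel-verified Lean document; each statement's English description precedes it below -/
import Mathlib

section
/- Let C be a unital (respectively weakly unital) category, u : Y → X a morphism, and ζ : Z → X a universal morphism commuting with u. Then ζ is a monomorphism. -/
open CategoryTheory CategoryTheory.Limits

universe v u w v₂ u₂

section Commutation

variable {C : Type u} [Category.{v} C]

/-- A pair of morphisms with common codomain commutes when it admits a cooperator. -/
def Commutes [HasZeroMorphisms C] [HasBinaryProducts C] {X Y Z : C}
    (f : X ⟶ Z) (g : Y ⟶ Z) : Prop :=
  ∃ φ : X ⨯ Y ⟶ Z, prod.lift (𝟙 X) 0 ≫ φ = f ∧ prod.lift 0 (𝟙 Y) ≫ φ = g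

/-- A pair of morphisms is jointly strongly epic when any monomorphism through which
both factor is an isomorphism. -/
def JointlyStronglyEpic {X Y Z : C} (i : X ⟶ Z) (j : Y ⟶ Z) : Prop :=
  ∀ ⦃M : C⦄ (m : M ⟶ Z), Mono m → (∃ a : X ⟶ M, a ≫ m = i) →
    (∃ b : Y ⟶ M, b ≫ m = j) → IsIso m

/-- A pointed category is unital when the two canonical monomorphisms into any binary
product are jointly strongly epic. -/
def IsUnital (C : Type u) [Category.{v} C] [HasZeroMorphisms C]
    [HasBinaryProducts C] : Prop :=
  ∀ X Y : C, JointlyStronglyEpic (prod.lift (𝟙 X) (0 : X ⟶ Y)) (prod.lift (0 : Y ⟶ X) (𝟙 Y))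

/-- A pointed category is weakly unital when the two canonical morphisms into any
binary product are jointly epic. -/
def IsWeaklyUnital (C : Type u) [Category.{v} C] [HasZeroMorphisms C]
    [HasBinaryProducts C] : Prop :=
  ∀ (X Y Z : C) (a b : X ⨯ Y ⟶ Z), prod.lift (𝟙 X) 0 ≫ a = prod.lift (𝟙 X) 0 ≫ b →
    prod.lift 0 (𝟙 Y) ≫ a = prod.lift 0 (𝟙 Y) ≫ b → a = b

/-- `ζ` is a universal morphism commuting with `u`: it commutes with `u` and every
morphism commuting with `u` factors uniquely through it. -/
def IsUniversalCommuting [HasZeroMorphisms C] [HasBinaryProducts C] {Y X Z : C}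
    (u : Y ⟶ X) (ζ : Z ⟶ X) : Prop :=
  Commutes u ζ ∧ ∀ ⦃T : C⦄ (h : T ⟶ X), Commutes u h → ∃! t : T ⟶ Z, t ≫ ζ = h

end Commutation


/-- in a unital (resp. weakly unital) category, any universal morphism
commuting with a morphism `u` is a monomorphism. -/
theorem statement2 (C : Type u) [Category.{v} C] [HasFiniteLimits C]
    [HasZeroObject C] [HasZeroMorphisms C]
    (hC : IsUnital C ∨ IsWeaklyUnital C)
    {Y X Z : C} (u : Y ⟶ X) (ζ : Z ⟶ X)
    (h : IsUniversalCommuting u ζ) : Mono ζ := by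
  obtain ⟨⟨φ, hφ1, hφ2⟩, huniv⟩ := h
  constructor
  intro T a b hab
  have hcomm : Commutes u (a ≫ ζ) := by
    refine ⟨prod.map (𝟙 Y) a ≫ φ, ?_, ?_⟩
    · rw [← Category.assoc]
      have : prod.lift (𝟙 Y) (0 : Y ⟶ T) ≫ prod.map (𝟙 Y) a = prod.lift (𝟙 Y) 0 := by
        ext <;> simp
      rw [this, hφ1]
    · rw [← Category.assoc]
      have : prod.lift (0 : T ⟶ Y) (𝟙 T) ≫ prod.map (𝟙 Y) a
          = a ≫ prod.lift 0 (𝟙 Z) := by ext <;> simp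
      rw [this, Category.assoc, hφ2]
  obtain ⟨t, _, ht⟩ := huniv (a ≫ ζ) hcomm
  rw [ht a rfl, ht b hab.symm]
end

section
/- Let C be a regular unital category, u : Y ↣ X a monomorphism, and h : T → X a morphism commuting with u. If h = m ∘ ρ is a factorization of h with ρ : T ↠ V a regular epimorphism and m : V ↣ X a monomorphism, then m commutes with u. -/
open CategoryTheory CategoryTheory.Limits

universe v u w v₂ u₂

section Regular

variable {C : Type u} [Category.{v} C]

/-- Kernel pairs admit coequalizers. -/
def KernelPairsHaveCoequalizers (C : Type u) [Category.{v} C] [HasPullbacks C] : Prop :=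
  ∀ {X Y : C} (f : X ⟶ Y), HasCoequalizer (pullback.fst f f) (pullback.snd f f)

/-- Regular epimorphisms are stable under pullback. -/
def RegularEpisPullbackStable (C : Type u) [Category.{v} C] [HasPullbacks C] : Prop :=
  ∀ {X Y Z : C} (f : X ⟶ Y) (g : Z ⟶ Y), Nonempty (RegularEpi f) →
    Nonempty (RegularEpi (pullback.snd f g))

/-- A regular category: finitely complete, kernel pairs have coequalizers, and regular
epimorphisms are stable under pullback. -/
def IsRegularCategory (C : Type u) [Category.{v} C] [HasFiniteLimits C] : Prop :=
  KernelPairsHaveCoequalizers C ∧ RegularEpisPullbackStable C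

end Regular

/-! The cooperator `φ : Y ⨯ T ⟶ X` of `u` and `ρ ≫ m` descends along `𝟙 Y × ρ`, which is a
regular epimorphism as a pullback of `ρ`. It suffices that `φ` coequalizes every pair `l, r`
coequalized by `𝟙 Y × ρ`. Such a pair factors as `⟨l₁, 𝟙⟩ ≫ (𝟙 Y × a)` and `⟨l₁, 𝟙⟩ ≫ (𝟙 Y × b)`
with `a ≫ ρ = b ≫ ρ`, and unitality reduces `(𝟙 Y × a) ≫ φ = (𝟙 Y × b) ≫ φ` to the two
injections, where `φ` restricts to `u` and to `ρ ≫ m`. -/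

section Cooperators

variable {C : Type u} [Category.{v} C]

lemma IsUnital.isWeaklyUnital [HasZeroMorphisms C] [HasBinaryProducts C] [HasEqualizers C]
    (hC : IsUnital C) : IsWeaklyUnital C := by
  intro X Y Z a b h₁ h₂
  have : IsIso (equalizer.ι a b) :=
    hC X Y _ inferInstance ⟨equalizer.lift _ h₁, equalizer.lift_ι _ _⟩
      ⟨equalizer.lift _ h₂, equalizer.lift_ι _ _⟩
  exact eq_of_epi_equalizer

lemma RegularEpisPullbackStable.isRegularEpi_prodMap [HasFiniteLimits C]
    (hstable : RegularEpisPullbackStable C) (Y : C) {T V : C} (ρ : T ⟶ V) [hρ : IsRegularEpi ρ] :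
    IsRegularEpi (prod.map (𝟙 Y) ρ) := by
  have hpb : IsRegularEpi (pullback.snd ρ (prod.snd : Y ⨯ V ⟶ V)) := ⟨hstable _ _ hρ.regularEpi⟩
  have hfac : prod.map (𝟙 Y) ρ = ((pullbackProdSndIsoProd ρ Y).inv ≫
      (pullbackSymmetry _ _).hom) ≫ pullback.snd ρ (prod.snd : Y ⨯ V ⟶ V) := by
    ext <;> simp
  rw [hfac]
  exact MorphismProperty.RespectsIso.precomp (MorphismProperty.regularEpi C) _ _ hpb

section WeaklyUnital

variable [HasZeroMorphisms C] [HasBinaryProducts C]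

lemma IsWeaklyUnital.prodMap_id_comp_eq (hC : IsWeaklyUnital C) {Y T Z K : C}
    (φ : Y ⨯ T ⟶ Z) (a b : K ⟶ T)
    (hab : a ≫ prod.lift 0 (𝟙 T) ≫ φ = b ≫ prod.lift 0 (𝟙 T) ≫ φ) :
    prod.map (𝟙 Y) a ≫ φ = prod.map (𝟙 Y) b ≫ φ := by
  have h₁ (c : K ⟶ T) : prod.lift (𝟙 Y) 0 ≫ prod.map (𝟙 Y) c = prod.lift (𝟙 Y) 0 := by
    ext <;> simp
  have h₂ (c : K ⟶ T) : prod.lift 0 (𝟙 K) ≫ prod.map (𝟙 Y) c = c ≫ prod.lift 0 (𝟙 T) := by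
    ext <;> simp
  apply hC
  · simp only [← Category.assoc, h₁]
  · simpa only [← Category.assoc, h₂] using hab

lemma IsWeaklyUnital.comp_eq_of_comp_prodMap_eq (hC : IsWeaklyUnital C) {Y T V Z W : C}
    (φ : Y ⨯ T ⟶ Z) (f : T ⟶ V) (n : V ⟶ Z) (hφ : prod.lift 0 (𝟙 T) ≫ φ = f ≫ n)
    (l r : W ⟶ Y ⨯ T) (hlr : l ≫ prod.map (𝟙 Y) f = r ≫ prod.map (𝟙 Y) f) :
    l ≫ φ = r ≫ φ := by
  have hfst : l ≫ prod.fst = r ≫ prod.fst := by simpa using hlr =≫ prod.fst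
  have hsnd : (l ≫ prod.snd) ≫ f = (r ≫ prod.snd) ≫ f := by simpa using hlr =≫ prod.snd
  have hl : l = prod.lift (l ≫ prod.fst) (𝟙 W) ≫ prod.map (𝟙 Y) (l ≫ prod.snd) := by
    ext <;> simp [prod.lift_fst, prod.lift_snd]
  have hr : r = prod.lift (l ≫ prod.fst) (𝟙 W) ≫ prod.map (𝟙 Y) (r ≫ prod.snd) := by
    ext <;> simp [hfst, prod.lift_fst, prod.lift_snd]
  rw [hl, hr, Category.assoc, Category.assoc, hC.prodMap_id_comp_eq φ]
  rw [hφ, ← Category.assoc, hsnd, Category.assoc]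

end WeaklyUnital

lemma Commutes.of_comp_isRegularEpi [HasFiniteLimits C] [HasZeroMorphisms C]
    (hreg : RegularEpisPullbackStable C) (hC : IsWeaklyUnital C) {Y X T V : C}
    {u : Y ⟶ X} (ρ : T ⟶ V) [IsRegularEpi ρ] (m : V ⟶ X) (hcomm : Commutes u (ρ ≫ m)) :
    Commutes u m := by
  obtain ⟨φ, hφ₁, hφ₂⟩ := hcomm
  have := hreg.isRegularEpi_prodMap Y ρ
  have hdesc := hC.comp_eq_of_comp_prodMap_eq φ ρ m hφ₂ _ _ (IsRegularEpi.w (prod.map (𝟙 Y) ρ))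
  obtain ⟨ψ, hψ⟩ : ∃ ψ, prod.map (𝟙 Y) ρ ≫ ψ = φ := ⟨_, IsRegularEpi.fac _ φ hdesc⟩
  refine ⟨ψ, ?_, ?_⟩
  · have : prod.lift (𝟙 Y) (0 : Y ⟶ T) ≫ prod.map (𝟙 Y) ρ = prod.lift (𝟙 Y) 0 := by
      ext <;> simp
    rw [← this, Category.assoc, hψ, hφ₁]
  · have : prod.lift (0 : T ⟶ Y) (𝟙 T) ≫ prod.map (𝟙 Y) ρ = ρ ≫ prod.lift 0 (𝟙 V) := by
      ext <;> simp
    rw [← cancel_epi ρ, ← reassoc_of% this, hψ, hφ₂]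

end Cooperators

theorem statement3_general (C : Type u) [Category.{v} C] [HasFiniteLimits C]
    [HasZeroMorphisms C]
    (hreg : IsRegularCategory C) (hC : IsUnital C)
    {Y X T V : C} (u : Y ⟶ X)
    (h : T ⟶ X) (hcomm : Commutes u h)
    (ρ : T ⟶ V) (m : V ⟶ X) (hρ : Nonempty (RegularEpi ρ))
    (hfac : ρ ≫ m = h) : Commutes u m := by
  have : IsRegularEpi ρ := ⟨hρ⟩
  subst hfac
  exact hcomm.of_comp_isRegularEpi hreg.2 hC.isWeaklyUnital ρ m

/-- in a regular unital category, if `h = ρ ≫ m` commutes with a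
monomorphism `u`, where `ρ` is a regular epimorphism and `m` a monomorphism, then
`m` commutes with `u`. -/
theorem statement3 (C : Type u) [Category.{v} C] [HasFiniteLimits C]
    [HasZeroObject C] [HasZeroMorphisms C]
    (hreg : IsRegularCategory C) (hC : IsUnital C)
    {Y X T V : C} (u : Y ⟶ X) (hu : Mono u)
    (h : T ⟶ X) (hcomm : Commutes u h)
    (ρ : T ⟶ V) (m : V ⟶ X) (hρ : Nonempty (RegularEpi ρ)) (hm : Mono m)
    (hfac : ρ ≫ m = h) : Commutes u m :=
  statement3_general C hreg hC u h hcomm ρ m hρ hfac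
end

section
/- Let U : E → F be a fully faithful functor preserving finite limits between finitely complete categories, and suppose U has a right adjoint G such that every component of the counit ε : U∘G ⇒ Id is a monomorphism. Then U is saturated on subobjects if and only if for every monomorphism j : X' ↣ X in F the naturality square with horizontal arrows U(G(j)) : U(G(X')) → U(G(X)) and j : X' → X and vertical arrows ε_{X'} and ε_X is a pullback in F. -/
open CategoryTheory CategoryTheory.Limits

universe v u w v₂ u₂


/-- `U` is saturated on subobjects: every subobject of `U Z` is, up to isomorphism,
the image by `U` of a subobject of `Z`. -/
def SaturatedOnSubobjects {E : Type u} [Category.{v} E] {F : Type u₂} [Category.{v₂} F]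
    (U : E ⥤ F) : Prop :=
  ∀ (Z : E) (R : F) (r : R ⟶ U.obj Z), Mono r →
    ∃ (S : E) (s : S ⟶ Z) (i : R ≅ U.obj S), Mono s ∧ i.hom ≫ U.map s = r

/-- Statement 6: a fully faithful left exact left adjoint `U` with monomorphic counit
is saturated on subobjects iff the counit naturality square at any monomorphism is a
pullback. -/
theorem statement6 {E : Type u} [Category.{v} E] {F : Type u₂} [Category.{v₂} F]
    [HasFiniteLimits E] [HasFiniteLimits F]
    (U : E ⥤ F) [U.Full] [U.Faithful] [PreservesFiniteLimits U]
    (G : F ⥤ E) (adj : U ⊣ G)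
    (hmono : ∀ X : F, Mono (adj.counit.app X)) :
    SaturatedOnSubobjects U ↔
      ∀ (X' X : F) (j : X' ⟶ X), Mono j →
        IsPullback (U.map (G.map j)) (adj.counit.app X') (adj.counit.app X) j := by
  constructor
  · intro hsat X' X j hj
    haveI := hj
    haveI := hmono X; haveI := hmono X'
    have hcomm : U.map (G.map j) ≫ adj.counit.app X = adj.counit.app X' ≫ j :=
      adj.counit.naturality j
    have hp : Mono (pullback.fst (adj.counit.app X) j) := inferInstance
    obtain ⟨S, s, i, hsmono, hcs⟩ := hsat (G.obj X) (pullback (adj.counit.app X) j)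
      (pullback.fst _ _) hp
    set f : U.obj S ⟶ X' := i.inv ≫ pullback.snd (adj.counit.app X) j with hf
    set t : S ⟶ G.obj X' := (adj.homEquiv S X') f with ht
    have hinv : i.inv ≫ pullback.fst (adj.counit.app X) j = U.map s := by
      rw [← hcs, Iso.inv_hom_id_assoc]
    have hUt : U.map t ≫ adj.counit.app X' = f := by
      have h0 : (adj.homEquiv S X').symm t = f := by
        rw [ht]; exact Equiv.symm_apply_apply _ _
      rw [← h0, adj.homEquiv_counit]
    have hts : t ≫ G.map j = s := by
      apply (adj.homEquiv S X).symm.injective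
      rw [adj.homEquiv_counit, adj.homEquiv_counit, U.map_comp, Category.assoc,
        hcomm, ← Category.assoc, hUt, hf, Category.assoc,
        ← pullback.condition, ← Category.assoc, hinv]
    set k : U.obj (G.obj X') ⟶ pullback (adj.counit.app X) j :=
      pullback.lift (U.map (G.map j)) (adj.counit.app X') hcomm with hk
    haveI : IsIso k := by
      refine ⟨i.hom ≫ U.map t, ?_, ?_⟩
      · rw [← cancel_mono (adj.counit.app X')]
        simp only [Category.assoc, hUt, hf, Iso.hom_inv_id_assoc, Category.id_comp, hk,
          pullback.lift_snd]
      · apply pullback.hom_ext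
        · simp only [Category.assoc, hk, pullback.lift_fst, Category.id_comp]
          rw [← U.map_comp, hts, ← hcs]
        · simp only [Category.assoc, hk, pullback.lift_snd, Category.id_comp, hUt, hf,
            Iso.hom_inv_id_assoc]
    exact IsPullback.of_iso_pullback ⟨hcomm⟩ (asIso k) (pullback.lift_fst _ _ _)
      (pullback.lift_snd _ _ _)
  · intro hpb Z R r hr
    haveI := hr
    haveI := hmono (U.obj Z); haveI := hmono R
    have h := hpb R (U.obj Z) r hr
    have w : (r ≫ U.map (adj.unit.app Z)) ≫ adj.counit.app (U.obj Z) = 𝟙 R ≫ r := by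
      rw [Category.assoc, adj.left_triangle_components, Category.comp_id, Category.id_comp]
    set l := h.lift (r ≫ U.map (adj.unit.app Z)) (𝟙 R) w with hl
    have h1 : l ≫ adj.counit.app R = 𝟙 R := h.lift_snd _ _ _
    have h2 : adj.counit.app R ≫ l = 𝟙 _ := by
      rw [← cancel_mono (adj.counit.app R), Category.assoc, h1]
      simp
    haveI : IsIso (adj.counit.app R) := ⟨l, h2, h1⟩
    refine ⟨G.obj R, U.preimage (adj.counit.app R ≫ r), (asIso (adj.counit.app R)).symm,
      ?_, ?_⟩
    · apply U.mono_of_mono_map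
      rw [U.map_preimage]
      exact mono_comp _ _
    · simp [U.map_preimage]
end

section
/- Let Y and T be groups. Equip the group T^Y of all functions Y → T under pointwise multiplication with the action of Y by group automorphisms given by (y • φ)(z) = φ(z·y), and form the semidirect product Y ⋉ T^Y with projection π : Y ⋉ T^Y → Y and canonical section y ↦ (y, 1). Then for every group X, every surjective group homomorphism f : X → Y with a group-homomorphic section s (f ∘ s = id_Y), and every group homomorphism h : ker f → T, there exists a unique group homomorphism χ : X → Y ⋉ T^Y such that π ∘ χ = f, χ(s(y)) = (y, 1) for all y ∈ Y, and for every k ∈ ker f the second component of χ(k), evaluated at the identity of Y, equals h(k). Explicitly, χ(x) = (f(x), y ↦ h(s(y)·x·s(f(x))⁻¹·s(y)⁻¹)). -/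
/-!
Let `χ` be a homomorphism over `Y` with `χ ∘ s = inr`. Right multiplication by `inr` does not
change the `left` component, and `(y • φ) 1 = φ y`, so
`(χ x).left y = (inr y * χ x * inr (f x)⁻¹ * (inr y)⁻¹).left 1
  = (χ (s y * x * (s (f x))⁻¹ * (s y)⁻¹)).left 1`.
The argument of `χ` on the right lies in `ker f`, where `χ` is prescribed by `h`; hence `χ` is
the explicit formula, and a direct computation in `X` shows that this formula is a homomorphism.
-/

/-- The action of a group `Y` on the group `T^Y = (Y → T)` of functions with pointwise
multiplication, given by `(y • φ) z = φ (z * y)`. -/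
def functionAction (Y T : Type*) [Group Y] [Group T] : Y →* MulAut (Y → T) where
  toFun y :=
    { toFun := fun φ z => φ (z * y)
      invFun := fun φ z => φ (z * y⁻¹)
      left_inv := by intro φ; funext z; simp [mul_assoc]
      right_inv := by intro φ; funext z; simp [mul_assoc]
      map_mul' := by intros; rfl }
  map_one' := by ext φ z; simp
  map_mul' := by intro a b; ext φ z; simp [mul_assoc]

namespace SemidirectProduct

variable {N G : Type*} [Group N] [Group G] {φ : G →* MulAut N}

theorem mul_inr_left (a : N ⋊[φ] G) (g : G) : (a * inr g).left = a.left := by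
  simp [mul_left]

end SemidirectProduct

section SplitExtension

open SemidirectProduct

theorem functionAction_apply {Y T : Type*} [Group Y] [Group T] (y : Y) (φ : Y → T) (z : Y) :
    functionAction Y T y φ z = φ (z * y) :=
  rfl

theorem inr_mul_mul_inv_inr_left_one {Y T : Type*} [Group Y] [Group T]
    (y : Y) (g : (Y → T) ⋊[functionAction Y T] Y) :
    (inr y * g * (inr y)⁻¹).left 1 = g.left y := by
  simp [mul_left, inv_left, functionAction_apply]

variable {X Y T : Type*} [Group X] [Group Y] [Group T] (f : X →* Y) (s : Y →* X)

theorem conj_mul_inv_section_mem_ker (hs : ∀ y, f (s y) = y) (y : Y) (x : X) :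
    s y * x * (s (f x))⁻¹ * (s y)⁻¹ ∈ f.ker := by
  simp [MonoidHom.mem_ker, hs]

variable (hs : ∀ y, f (s y) = y) (h : f.ker →* T)

def splitExtensionLift : X →* (Y → T) ⋊[functionAction Y T] Y where
  toFun x := ⟨fun y => h ⟨_, conj_mul_inv_section_mem_ker f s hs y x⟩, f x⟩
  map_one' := by
    ext y
    · refine (congrArg h (Subtype.ext ?_)).trans (map_one h)
      simp
    · exact map_one f
  map_mul' x₁ x₂ := by
    ext y
    · simp only [mul_left, Pi.mul_apply, functionAction_apply, ← map_mul]
      congr 1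
      ext
      simp only [Subgroup.coe_mul, map_mul, mul_inv_rev]
      group
    · exact map_mul f x₁ x₂

theorem splitExtensionLift_apply (x : X) :
    splitExtensionLift f s hs h x =
      ⟨fun y => h ⟨_, conj_mul_inv_section_mem_ker f s hs y x⟩, f x⟩ :=
  rfl

theorem rightHom_comp_splitExtensionLift :
    rightHom.comp (splitExtensionLift f s hs h) = f :=
  rfl

theorem splitExtensionLift_section (y : Y) : splitExtensionLift f s hs h (s y) = inr y := by
  ext z
  · refine (congrArg h (Subtype.ext ?_)).trans (map_one h)
    simp [hs]
  · exact hs y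

theorem splitExtensionLift_ker_left_one (k : f.ker) :
    (splitExtensionLift f s hs h k).left 1 = h k := by
  simp [splitExtensionLift_apply, MonoidHom.mem_ker.mp k.2]

theorem eq_splitExtensionLift {χ : X →* (Y → T) ⋊[functionAction Y T] Y}
    (hχf : rightHom.comp χ = f) (hχs : ∀ y, χ (s y) = inr y)
    (hχh : ∀ k : f.ker, (χ k).left 1 = h k) :
    χ = splitExtensionLift f s hs h := by
  ext x y
  · calc (χ x).left y = (χ x * inr (f x)⁻¹).left y := by rw [mul_inr_left]
      _ = (inr y * (χ x * inr (f x)⁻¹) * (inr y)⁻¹).left 1 :=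
        (inr_mul_mul_inv_inr_left_one y _).symm
      _ = (χ (s y * x * (s (f x))⁻¹ * (s y)⁻¹)).left 1 := by
        simp only [map_mul, map_inv, hχs, mul_assoc]
      _ = _ := hχh ⟨_, conj_mul_inv_section_mem_ker f s hs y x⟩
  · exact DFunLike.congr_fun hχf x

end SplitExtension

/-- Statement 17: in the category of groups, the change of base along `1 → Y` with
respect to the fibration of points has a right adjoint: for every split extension
`(f, s)` over `Y` and homomorphism `h : ker f → T` there is a unique homomorphism
`χ : X → Y ⋉ T^Y` over `Y`, compatible with the sections, whose kernel-component at
`1` is `h`; explicitly `χ x = (f x, fun y => h (s y * x * (s (f x))⁻¹ * (s y)⁻¹))`. -/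
theorem statement17 (Y T : Type*) [Group Y] [Group T]
    (X : Type*) [Group X] (f : X →* Y)
    (s : Y →* X) (hs : ∀ y, f (s y) = y) (h : f.ker →* T) :
    (∃! χ : X →* (Y → T) ⋊[functionAction Y T] Y,
      SemidirectProduct.rightHom.comp χ = f ∧
      (∀ y : Y, χ (s y) = SemidirectProduct.inr y) ∧
      (∀ k : f.ker, (χ (k : X)).left 1 = h k)) ∧
    (∀ χ : X →* (Y → T) ⋊[functionAction Y T] Y,
      (SemidirectProduct.rightHom.comp χ = f ∧
        (∀ y : Y, χ (s y) = SemidirectProduct.inr y) ∧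
        (∀ k : f.ker, (χ (k : X)).left 1 = h k)) →
      ∀ x : X,
        χ x = ⟨fun y => h ⟨s y * x * (s (f x))⁻¹ * (s y)⁻¹, by
          simp [MonoidHom.mem_ker, hs]⟩, f x⟩) := by
  refine ⟨⟨splitExtensionLift f s hs h,
      ⟨rightHom_comp_splitExtensionLift f s hs h, splitExtensionLift_section f s hs h,
        splitExtensionLift_ker_left_one f s hs h⟩,
      fun χ ⟨hχf, hχs, hχh⟩ => eq_splitExtensionLift f s hs h hχf hχs hχh⟩,
    fun χ ⟨hχf, hχs, hχh⟩ x => ?_⟩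
  rw [eq_splitExtensionLift f s hs h hχf hχs hχh]
  rfl
end

section
/- Let X be a group, H a subgroup of X, and C = {x ∈ X : x·h = h·x for all h ∈ H} the centralizer of H in X. Then: (i) the map H × C → X, (h, c) ↦ h·c, is a group homomorphism; and (ii) for every group T and every group homomorphism f : T → X, if there exists a group homomorphism φ : H × T → X with φ(h, 1) = h for all h ∈ H and φ(1, t) = f(t) for all t ∈ T, then the range of f is contained in C, so that f factors (necessarily uniquely) through the inclusion C ↪ X. -/
/-- The centralizer `{x : X | ∀ h ∈ H, x * h = h * x}` of a subgroup `H` of `X`. -/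
def centralizerSubgroup {X : Type*} [Group X] (H : Subgroup X) : Subgroup X where
  carrier := {x : X | ∀ h ∈ H, x * h = h * x}
  one_mem' := by intro h hh; rw [one_mul, mul_one]
  mul_mem' := by
    intro a b ha hb h hh
    rw [mul_assoc, hb h hh, ← mul_assoc, ha h hh, mul_assoc]
  inv_mem' := by
    intro a ha h hh
    rw [inv_mul_eq_iff_eq_mul, ← mul_assoc, ha h hh, mul_inv_cancel_right]

/-- Statement 19: in the category of groups the centralizer of a subgroup `H ≤ X` is
the universal morphism commuting with the inclusion: (i) `(h, c) ↦ h * c` is a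
homomorphism `H × C → X`, and (ii) any homomorphism `f : T → X` admitting a
cooperator with the inclusion of `H` takes values in `C` and thus factors uniquely
through `C ↪ X`. -/
theorem statement19 (X : Type*) [Group X] (H : Subgroup X) :
    (∀ a b : H × (centralizerSubgroup H),
      ((a * b).1 : X) * ((a * b).2 : X) =
        ((a.1 : X) * (a.2 : X)) * ((b.1 : X) * (b.2 : X))) ∧
    (∀ (T : Type*) [Group T] (f : T →* X),
      (∃ φ : (H × T) →* X, (∀ h : H, φ (h, 1) = (h : X)) ∧ (∀ t : T, φ (1, t) = f t)) →
      (∀ t : T, f t ∈ centralizerSubgroup H) ∧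
      ∃! g : T →* centralizerSubgroup H, (centralizerSubgroup H).subtype.comp g = f) := by
  constructor
  · rintro ⟨a1, a2⟩ ⟨b1, b2⟩
    have h := a2.2 (b1 : X) b1.2
    simp only [Prod.fst_mul, Prod.snd_mul, Subgroup.coe_mul]
    calc (a1 : X) * b1 * ((a2 : X) * b2)
        = (a1 : X) * (b1 * a2) * b2 := by group
      _ = (a1 : X) * (a2 * b1) * b2 := by rw [← h]
      _ = (a1 : X) * a2 * ((b1 : X) * b2) := by group
  · rintro T _ f ⟨φ, hφ1, hφ2⟩
    have key : ∀ t : T, f t ∈ centralizerSubgroup H := by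
      intro t h hh
      have e1 : ((1 : H), t) * ((⟨h, hh⟩ : H), (1 : T)) = ((⟨h, hh⟩ : H), t) := by
        simp
      have e2 : ((⟨h, hh⟩ : H), (1 : T)) * ((1 : H), t) = ((⟨h, hh⟩ : H), t) := by
        simp
      have A : φ (((1 : H), t) * ((⟨h, hh⟩ : H), (1 : T))) = f t * h := by
        rw [map_mul, hφ1, hφ2]
      have B : φ (((⟨h, hh⟩ : H), (1 : T)) * ((1 : H), t)) = h * f t := by
        rw [map_mul, hφ1, hφ2]
      rw [← A, ← B, e1, e2]
    refine ⟨key, ⟨f.codRestrict _ key, ?_, ?_⟩⟩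
    · ext t; rfl
    · intro g hg
      ext t
      have := congrArg (fun m : T →* X => m t) hg
      exact this
end
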